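/- The merging coefficient function h is smooth for κ > e^{−2}: there exists a function H : (0,1) × (e^{−2},1) → ℝ that is infinitely differentiable (C^∞) on this open set and such that for every (m,κ) in the domain, H(m,κ) lies in [0,1] and is a maximizer of s_{m,κ} on [0,1]. -/

import Mathlib

noncomputable def s (m κ h : ℝ) : ℝ := m * κ ^ ((1 - h) ^ 2) + (1 - m) * κ ^ (h ^ 2)

open Real Set

/-- The critical point equation for `s`, in logarithmic form. -/
noncomputable def mcPsi (m κ h : ℝ) : ℝ :=
  Real.log m - Real.log (1 - m) + Real.log (1 - h) - Real.log h + Real.log κ * (1 - 2 * h)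

lemma mcPsi_hasDerivAt {h : ℝ} (m κ : ℝ) (hh : h ∈ Set.Ioo (0 : ℝ) 1) :
    HasDerivAt (mcPsi m κ) (-(1 - h)⁻¹ - h⁻¹ - 2 * Real.log κ) h := by
  have h1h : (1 : ℝ) - h ≠ 0 := by have := hh.2; intro e; linarith [e]
  have d0 : HasDerivAt (fun x : ℝ => 1 - x) (-1) h := by
    simpa using (hasDerivAt_id h).const_sub 1
  have d1 : HasDerivAt (fun x : ℝ => Real.log (1 - x)) ((1 - h)⁻¹ * (-1)) h :=
    (Real.hasDerivAt_log h1h).comp h d0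
  have d2 : HasDerivAt Real.log h⁻¹ h := Real.hasDerivAt_log (ne_of_gt hh.1)
  have d3 : HasDerivAt (fun x : ℝ => Real.log κ * (1 - 2 * x)) (Real.log κ * (-2)) h := by
    have : HasDerivAt (fun x : ℝ => 1 - 2 * x) (-2) h := by
      simpa using ((hasDerivAt_id h).const_mul 2).const_sub 1
    simpa using this.const_mul (Real.log κ)
  have := (((d1.const_add (Real.log m - Real.log (1 - m))).sub d2).add d3)
  refine this.congr_deriv ?_
  ring

lemma mcPsi_deriv_neg {κ h : ℝ} (hκ : κ ∈ Set.Ioo (Real.exp (-2)) 1)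
    (hh : h ∈ Set.Ioo (0 : ℝ) 1) : -(1 - h)⁻¹ - h⁻¹ - 2 * Real.log κ < 0 := by
  have hlog : -2 < Real.log κ := by
    have := Real.log_lt_log (Real.exp_pos _) hκ.1
    rwa [Real.log_exp] at this
  have h0 : 0 < h := hh.1
  have h1 : 0 < 1 - h := by linarith [hh.2]
  have e1 : h * h⁻¹ = 1 := mul_inv_cancel₀ (ne_of_gt h0)
  have e2 : (1 - h) * (1 - h)⁻¹ = 1 := mul_inv_cancel₀ (ne_of_gt h1)
  have hi1 : 0 < h⁻¹ := inv_pos.mpr h0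
  have hi2 : 0 < (1 - h)⁻¹ := inv_pos.mpr h1
  have key : 4 ≤ h⁻¹ + (1 - h)⁻¹ := by nlinarith [sq_nonneg (h⁻¹ - (1 - h)⁻¹), sq_nonneg (2 * h - 1), mul_pos hi1 hi2]
  linarith

lemma mcPsi_continuousOn (m κ : ℝ) :
    ContinuousOn (mcPsi m κ) (Set.Ioo (0 : ℝ) 1) := fun x hx =>
  ((mcPsi_hasDerivAt m κ hx).continuousAt).continuousWithinAt

lemma mcPsi_strictAntiOn {κ : ℝ} (m : ℝ) (hκ : κ ∈ Set.Ioo (Real.exp (-2)) 1) :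
    StrictAntiOn (mcPsi m κ) (Set.Ioo (0 : ℝ) 1) := by
  apply strictAntiOn_of_deriv_neg (convex_Ioo 0 1) (mcPsi_continuousOn m κ)
  intro x hx
  rw [interior_Ioo] at hx
  rw [(mcPsi_hasDerivAt m κ hx).deriv]
  exact mcPsi_deriv_neg hκ hx

lemma mcPsi_exists_root {m κ : ℝ} (hm : m ∈ Set.Ioo (0 : ℝ) 1)
    (hκ : κ ∈ Set.Ioo (Real.exp (-2)) 1) :
    ∃ x ∈ Set.Ioo (0 : ℝ) 1, mcPsi m κ x = 0 := by
  have hm0 : 0 < m := hm.1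
  have hm1 : 0 < 1 - m := by linarith [hm.2]
  have hκ0 : 0 < κ := lt_trans (Real.exp_pos _) hκ.1
  have hκ1 : κ < 1 := hκ.2
  have hlogκ1 : Real.log κ < 0 := Real.log_neg hκ0 hκ1
  have hlogκ2 : -2 < Real.log κ := by
    have := Real.log_lt_log (Real.exp_pos _) hκ.1
    rwa [Real.log_exp] at this
  set C : ℝ := Real.log m - Real.log (1 - m) with hC
  set a : ℝ := Real.exp (-(|C| + 4)) with ha
  have ha0 : 0 < a := Real.exp_pos _
  have ha4 : a ≤ Real.exp (-4) := Real.exp_le_exp.mpr (by have := abs_nonneg C; linarith)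
  have hexp4 : (5 : ℝ) ≤ Real.exp 4 := by
    have := Real.add_one_le_exp (4 : ℝ); linarith
  have haq : a ≤ 1 / 5 := by
    have : Real.exp (-4) = (Real.exp 4)⁻¹ := Real.exp_neg 4
    have h5 : (Real.exp 4)⁻¹ ≤ 1 / 5 := by
      rw [one_div]
      exact inv_anti₀ (by norm_num) hexp4
    calc a ≤ Real.exp (-4) := ha4
      _ = (Real.exp 4)⁻¹ := this
      _ ≤ 1 / 5 := h5
  have hahalf : a < 1 / 2 := lt_of_le_of_lt haq (by norm_num)
  have hloga : Real.log a = -(|C| + 4) := Real.log_exp _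
  have hlog2 : Real.log 2 ≤ 1 := by
    have := Real.log_le_sub_one_of_pos (by norm_num : (0:ℝ) < 2); linarith
  set b : ℝ := 1 - a with hb
  have hab : a ≤ b := by simp only [hb]; linarith
  have hbmem : b < 1 := by simp only [hb]; linarith
  have hamem : 0 < a := ha0
  -- bound mcPsi at a from below
  have hna : (1 : ℝ) / 2 ≤ 1 - a := by linarith
  have hlog1a : -1 ≤ Real.log (1 - a) := by
    have h2 : Real.log (1/2) ≤ Real.log (1 - a) :=
      Real.log_le_log (by norm_num) hna
    have : Real.log (1/2) = -Real.log 2 := by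
      rw [one_div, Real.log_inv]
    linarith
  have hlκa : -2 ≤ Real.log κ * (1 - 2 * a) := by
    have h12a : 0 ≤ 1 - 2 * a := by linarith
    have h12a' : 1 - 2 * a ≤ 1 := by linarith
    nlinarith
  have hpa : 0 < mcPsi m κ a := by
    have : mcPsi m κ a = C + Real.log (1 - a) - Real.log a + Real.log κ * (1 - 2 * a) := by
      simp only [mcPsi, hC]; try ring
    rw [this, hloga]
    have hCabs : -|C| ≤ C := neg_abs_le C
    linarith
  -- bound mcPsi at b from above
  have hpb : mcPsi m κ b < 0 := by
    have hbexp : mcPsi m κ b = C + Real.log a - Real.log (1 - a) + Real.log κ * (2 * a - 1) := by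
      simp only [mcPsi, hb, hC]
      ring_nf
    have hlog1a' : Real.log (1 - a) ≥ -1 := hlog1a
    have hl1a_le : -Real.log (1 - a) ≤ 1 := by
      have h1a1 : 1 - a ≤ 1 := by linarith
      have := Real.log_nonpos (by linarith) h1a1
      linarith [hlog1a]
    have hlκb : Real.log κ * (2 * a - 1) ≤ 2 := by
      have h12a : -1 ≤ 2 * a - 1 := by linarith
      have h12a' : 2 * a - 1 ≤ 0 := by linarith
      nlinarith
    rw [hbexp, hloga]
    have hCabs : C ≤ |C| := le_abs_self C
    linarith
  -- intermediate value theorem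
  have hsub : Set.Icc a b ⊆ Set.Ioo (0 : ℝ) 1 := fun x hx =>
    ⟨lt_of_lt_of_le ha0 hx.1, lt_of_le_of_lt hx.2 hbmem⟩
  have hcont : ContinuousOn (mcPsi m κ) (Set.Icc a b) :=
    (mcPsi_continuousOn m κ).mono hsub
  have := intermediate_value_Icc' hab hcont
  have h0mem : (0 : ℝ) ∈ Set.Icc (mcPsi m κ b) (mcPsi m κ a) := ⟨le_of_lt hpb, le_of_lt hpa⟩
  obtain ⟨x, hx, hx0⟩ := this h0mem
  exact ⟨x, hsub hx, hx0⟩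

open scoped Classical in
/-- The merging coefficient: the unique root of `mcPsi` in `(0,1)` when it exists. -/
noncomputable def mcH (p : ℝ × ℝ) : ℝ :=
  if hx : ∃ x ∈ Set.Ioo (0 : ℝ) 1, mcPsi p.1 p.2 x = 0 then hx.choose else 1 / 2

lemma mcH_spec {p : ℝ × ℝ} (hm : p.1 ∈ Set.Ioo (0 : ℝ) 1)
    (hκ : p.2 ∈ Set.Ioo (Real.exp (-2)) 1) :
    mcH p ∈ Set.Ioo (0 : ℝ) 1 ∧ mcPsi p.1 p.2 (mcH p) = 0 := by
  have hx := mcPsi_exists_root hm hκ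
  unfold mcH
  rw [dif_pos hx]
  exact ⟨hx.choose_spec.1, hx.choose_spec.2⟩

lemma mcH_unique {p : ℝ × ℝ} (hm : p.1 ∈ Set.Ioo (0 : ℝ) 1)
    (hκ : p.2 ∈ Set.Ioo (Real.exp (-2)) 1) {x : ℝ} (hx : x ∈ Set.Ioo (0 : ℝ) 1)
    (hx0 : mcPsi p.1 p.2 x = 0) : x = mcH p := by
  obtain ⟨hmem, hroot⟩ := mcH_spec hm hκ
  exact (mcPsi_strictAntiOn p.1 hκ).injOn hx hmem (by rw [hx0, hroot])

lemma s_hasDerivAt {m κ : ℝ} (hκ : 0 < κ) (h : ℝ) :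
    HasDerivAt (s m κ)
      (2 * Real.log κ * ((1 - m) * h * κ ^ (h ^ 2) - m * (1 - h) * κ ^ ((1 - h) ^ 2))) h := by
  have d1 : HasDerivAt (fun x : ℝ => (1 - x) ^ 2) (2 * (1 - h) * (-1)) h := by
    have d0 : HasDerivAt (fun x : ℝ => 1 - x) (-1) h := by
      simpa using (hasDerivAt_id h).const_sub 1
    have := d0.fun_pow 2
    simpa using this
  have d2 : HasDerivAt (fun x : ℝ => x ^ 2) (2 * h) h := by
    simpa using (hasDerivAt_id h).fun_pow 2
  have e1 : HasDerivAt (fun x : ℝ => κ ^ ((1 - x) ^ 2))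
      (κ ^ ((1 - h) ^ 2) * Real.log κ * (2 * (1 - h) * (-1))) h :=
    (Real.hasStrictDerivAt_const_rpow hκ ((1 - h) ^ 2)).hasDerivAt.comp h d1
  have e2 : HasDerivAt (fun x : ℝ => κ ^ (x ^ 2))
      (κ ^ (h ^ 2) * Real.log κ * (2 * h)) h :=
    (Real.hasStrictDerivAt_const_rpow hκ (h ^ 2)).hasDerivAt.comp h d2
  have := (e1.const_mul m).add (e2.const_mul (1 - m))
  refine this.congr_deriv ?_
  ring

lemma mcPsi_eq_log_sub_log {m κ x : ℝ} (hm : m ∈ Set.Ioo (0 : ℝ) 1) (hκ : 0 < κ)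
    (hx : x ∈ Set.Ioo (0 : ℝ) 1) :
    mcPsi m κ x = Real.log (m * (1 - x) * κ ^ ((1 - x) ^ 2))
      - Real.log ((1 - m) * x * κ ^ (x ^ 2)) := by
  have hm0 : m ≠ 0 := ne_of_gt hm.1
  have hm1 : (1 : ℝ) - m ≠ 0 := by have := hm.2; intro e; linarith
  have hx0 : x ≠ 0 := ne_of_gt hx.1
  have hx1 : (1 : ℝ) - x ≠ 0 := by have := hx.2; intro e; linarith
  have hr1 : (κ : ℝ) ^ ((1 - x) ^ 2) ≠ 0 := ne_of_gt (Real.rpow_pos_of_pos hκ _)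
  have hr2 : (κ : ℝ) ^ (x ^ 2) ≠ 0 := ne_of_gt (Real.rpow_pos_of_pos hκ _)
  rw [Real.log_mul (mul_ne_zero hm0 hx1) hr1, Real.log_mul hm0 hx1,
    Real.log_mul (mul_ne_zero hm1 hx0) hr2, Real.log_mul hm1 hx0,
    Real.log_rpow hκ, Real.log_rpow hκ]
  simp only [mcPsi]
  ring

lemma s_deriv_pos {m κ x : ℝ} (hm : m ∈ Set.Ioo (0 : ℝ) 1)
    (hκ : κ ∈ Set.Ioo (Real.exp (-2)) 1) (hx : x ∈ Set.Ioo (0 : ℝ) 1)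
    (hpsi : 0 < mcPsi m κ x) :
    0 < 2 * Real.log κ * ((1 - m) * x * κ ^ (x ^ 2) - m * (1 - x) * κ ^ ((1 - x) ^ 2)) := by
  have hκ0 : 0 < κ := lt_trans (Real.exp_pos _) hκ.1
  have hA : 0 < m * (1 - x) * κ ^ ((1 - x) ^ 2) :=
    mul_pos (mul_pos hm.1 (by linarith [hx.2])) (Real.rpow_pos_of_pos hκ0 _)
  have hB : 0 < (1 - m) * x * κ ^ (x ^ 2) :=
    mul_pos (mul_pos (by linarith [hm.2]) hx.1) (Real.rpow_pos_of_pos hκ0 _)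
  have hlt : (1 - m) * x * κ ^ (x ^ 2) < m * (1 - x) * κ ^ ((1 - x) ^ 2) := by
    have := mcPsi_eq_log_sub_log hm hκ0 hx
    rw [this] at hpsi
    have : Real.log ((1 - m) * x * κ ^ (x ^ 2))
        < Real.log (m * (1 - x) * κ ^ ((1 - x) ^ 2)) := by linarith
    exact (Real.log_lt_log_iff hB hA).mp this
  have hlogκ : Real.log κ < 0 := Real.log_neg hκ0 hκ.2
  have : (1 - m) * x * κ ^ (x ^ 2) - m * (1 - x) * κ ^ ((1 - x) ^ 2) < 0 := by linarith
  nlinarith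

lemma s_deriv_neg' {m κ x : ℝ} (hm : m ∈ Set.Ioo (0 : ℝ) 1)
    (hκ : κ ∈ Set.Ioo (Real.exp (-2)) 1) (hx : x ∈ Set.Ioo (0 : ℝ) 1)
    (hpsi : mcPsi m κ x < 0) :
    2 * Real.log κ * ((1 - m) * x * κ ^ (x ^ 2) - m * (1 - x) * κ ^ ((1 - x) ^ 2)) < 0 := by
  have hκ0 : 0 < κ := lt_trans (Real.exp_pos _) hκ.1
  have hA : 0 < m * (1 - x) * κ ^ ((1 - x) ^ 2) :=
    mul_pos (mul_pos hm.1 (by linarith [hx.2])) (Real.rpow_pos_of_pos hκ0 _)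
  have hB : 0 < (1 - m) * x * κ ^ (x ^ 2) :=
    mul_pos (mul_pos (by linarith [hm.2]) hx.1) (Real.rpow_pos_of_pos hκ0 _)
  have hlt : m * (1 - x) * κ ^ ((1 - x) ^ 2) < (1 - m) * x * κ ^ (x ^ 2) := by
    have := mcPsi_eq_log_sub_log hm hκ0 hx
    rw [this] at hpsi
    have : Real.log (m * (1 - x) * κ ^ ((1 - x) ^ 2))
        < Real.log ((1 - m) * x * κ ^ (x ^ 2)) := by linarith
    exact (Real.log_lt_log_iff hA hB).mp this
  have hlogκ : Real.log κ < 0 := Real.log_neg hκ0 hκ.2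
  have : 0 < (1 - m) * x * κ ^ (x ^ 2) - m * (1 - x) * κ ^ ((1 - x) ^ 2) := by linarith
  nlinarith

lemma mcH_isMaxOn {p : ℝ × ℝ} (hm : p.1 ∈ Set.Ioo (0 : ℝ) 1)
    (hκ : p.2 ∈ Set.Ioo (Real.exp (-2)) 1) :
    IsMaxOn (s p.1 p.2) (Set.Icc 0 1) (mcH p) := by
  obtain ⟨hmem, hroot⟩ := mcH_spec hm hκ
  set h0 := mcH p with hh0
  have hκ0 : 0 < p.2 := lt_trans (Real.exp_pos _) hκ.1
  have hcont : ∀ t : Set ℝ, ContinuousOn (s p.1 p.2) t := fun t x _ =>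
    ((s_hasDerivAt hκ0 x).continuousAt).continuousWithinAt
  have hanti := mcPsi_strictAntiOn p.1 hκ
  have hmono : MonotoneOn (s p.1 p.2) (Set.Icc 0 h0) := by
    apply (strictMonoOn_of_deriv_pos (convex_Icc 0 h0) (hcont _) ?_).monotoneOn
    intro x hx
    rw [interior_Icc] at hx
    have hx1 : x ∈ Set.Ioo (0 : ℝ) 1 := ⟨hx.1, lt_trans hx.2 hmem.2⟩
    have hpsi : 0 < mcPsi p.1 p.2 x := by
      have := hanti hx1 hmem hx.2
      rwa [hroot] at this
    rw [(s_hasDerivAt hκ0 x).deriv]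
    exact s_deriv_pos hm hκ hx1 hpsi
  have hanti' : AntitoneOn (s p.1 p.2) (Set.Icc h0 1) := by
    apply (strictAntiOn_of_deriv_neg (convex_Icc h0 1) (hcont _) ?_).antitoneOn
    intro x hx
    rw [interior_Icc] at hx
    have hx1 : x ∈ Set.Ioo (0 : ℝ) 1 := ⟨lt_trans hmem.1 hx.1, hx.2⟩
    have hpsi : mcPsi p.1 p.2 x < 0 := by
      have := hanti hmem hx1 hx.1
      rwa [hroot] at this
    rw [(s_hasDerivAt hκ0 x).deriv]
    exact s_deriv_neg' hm hκ hx1 hpsi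
  rw [isMaxOn_iff]
  intro y hy
  rcases le_or_gt y h0 with hle | hgt
  · exact hmono ⟨hy.1, hle⟩ ⟨le_of_lt hmem.1, le_refl h0⟩ hle
  · exact hanti' ⟨le_refl h0, le_of_lt hmem.2⟩ ⟨le_of_lt hgt, hy.2⟩ (le_of_lt hgt)


/-- `mcPsi` as a function on the product space. -/
noncomputable def mcPsiF (x : (ℝ × ℝ) × ℝ) : ℝ := mcPsi x.1.1 x.1.2 x.2

/-- The map used for the inverse function theorem. -/
noncomputable def mcG (x : (ℝ × ℝ) × ℝ) : (ℝ × ℝ) × ℝ := (x.1, mcPsiF x)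

lemma mcPsiF_contDiffAt {x₀ : (ℝ × ℝ) × ℝ} (hm : x₀.1.1 ∈ Set.Ioo (0 : ℝ) 1)
    (hκ : 0 < x₀.1.2) (hh : x₀.2 ∈ Set.Ioo (0 : ℝ) 1) :
    ContDiffAt ℝ (⊤ : ℕ∞) mcPsiF x₀ := by
  have cm : ContDiff ℝ (⊤ : ℕ∞) (fun x : (ℝ × ℝ) × ℝ => x.1.1) := contDiff_fst.comp contDiff_fst
  have cκ : ContDiff ℝ (⊤ : ℕ∞) (fun x : (ℝ × ℝ) × ℝ => x.1.2) := contDiff_snd.comp contDiff_fst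
  have ch : ContDiff ℝ (⊤ : ℕ∞) (fun x : (ℝ × ℝ) × ℝ => x.2) := contDiff_snd
  have t1 : ContDiffAt ℝ (⊤ : ℕ∞) (fun x : (ℝ × ℝ) × ℝ => Real.log x.1.1) x₀ :=
    cm.contDiffAt.log (ne_of_gt hm.1)
  have t2 : ContDiffAt ℝ (⊤ : ℕ∞) (fun x : (ℝ × ℝ) × ℝ => Real.log (1 - x.1.1)) x₀ :=
    (contDiffAt_const.sub cm.contDiffAt).log (by have := hm.2; intro e; linarith)
  have t3 : ContDiffAt ℝ (⊤ : ℕ∞) (fun x : (ℝ × ℝ) × ℝ => Real.log (1 - x.2)) x₀ :=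
    (contDiffAt_const.sub ch.contDiffAt).log (by have := hh.2; intro e; linarith)
  have t4 : ContDiffAt ℝ (⊤ : ℕ∞) (fun x : (ℝ × ℝ) × ℝ => Real.log x.2) x₀ :=
    ch.contDiffAt.log (ne_of_gt hh.1)
  have t5 : ContDiffAt ℝ (⊤ : ℕ∞)
      (fun x : (ℝ × ℝ) × ℝ => Real.log x.1.2 * (1 - 2 * x.2)) x₀ :=
    (cκ.contDiffAt.log (ne_of_gt hκ)).mul
      (contDiffAt_const.sub (contDiffAt_const.mul ch.contDiffAt))
  exact (((t1.sub t2).add t3).sub t4).add t5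

lemma mcH_contDiffAt {p₀ : ℝ × ℝ} (hm : p₀.1 ∈ Set.Ioo (0 : ℝ) 1)
    (hκ : p₀.2 ∈ Set.Ioo (Real.exp (-2)) 1) :
    ContDiffAt ℝ (⊤ : ℕ∞) mcH p₀ := by
  obtain ⟨hHmem, hHroot⟩ := mcH_spec hm hκ
  have hκ0 : 0 < p₀.2 := lt_trans (Real.exp_pos _) hκ.1
  set x₀ : (ℝ × ℝ) × ℝ := (p₀, mcH p₀) with hx₀
  -- smoothness of mcPsiF and mcG at x₀
  have hPsi : ContDiffAt ℝ (⊤ : ℕ∞) mcPsiF x₀ := mcPsiF_contDiffAt hm hκ0 hHmem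
  have hGci : ContDiffAt ℝ (⊤ : ℕ∞) mcG x₀ := (contDiff_fst.contDiffAt).prodMk hPsi
  -- the derivative of mcPsiF at x₀
  set Lp : ((ℝ × ℝ) × ℝ) →L[ℝ] ℝ := fderiv ℝ mcPsiF x₀ with hLp
  have hPdf : HasFDerivAt mcPsiF Lp x₀ := (hPsi.differentiableAt (by simp)).hasFDerivAt
  set k : ℝ := Lp ((0 : ℝ × ℝ), (1 : ℝ)) with hk
  -- identify k with the partial derivative of mcPsi in the last variable
  have hcurve : HasDerivAt (fun t : ℝ => ((p₀ : ℝ × ℝ), t)) ((0 : ℝ × ℝ), (1 : ℝ)) (mcH p₀) :=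
    (hasDerivAt_const _ _).prodMk (hasDerivAt_id _)
  have hcomp : HasDerivAt (fun t : ℝ => mcPsiF (p₀, t)) k (mcH p₀) := by
    have : HasFDerivAt mcPsiF Lp (p₀, mcH p₀) := hPdf
    exact this.comp_hasDerivAt (mcH p₀) hcurve
  have hdirect : HasDerivAt (fun t : ℝ => mcPsiF (p₀, t))
      (-(1 - mcH p₀)⁻¹ - (mcH p₀)⁻¹ - 2 * Real.log p₀.2) (mcH p₀) :=
    mcPsi_hasDerivAt p₀.1 p₀.2 hHmem
  have hkval : k = -(1 - mcH p₀)⁻¹ - (mcH p₀)⁻¹ - 2 * Real.log p₀.2 :=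
    hcomp.unique hdirect
  have hkne : k ≠ 0 := by
    rw [hkval]; exact ne_of_lt (mcPsi_deriv_neg hκ hHmem)
  -- build the derivative of mcG at x₀ as an equivalence
  have key : ∀ x : (ℝ × ℝ) × ℝ, Lp x = Lp (x.1, 0) + x.2 * k := by
    intro x
    have hxdec : x = (x.1, (0 : ℝ)) + x.2 • ((0 : ℝ × ℝ), (1 : ℝ)) := by
      simp [Prod.ext_iff]
    calc Lp x = Lp ((x.1, (0 : ℝ)) + x.2 • ((0 : ℝ × ℝ), (1 : ℝ))) := by rw [← hxdec]
    _ = Lp (x.1, 0) + x.2 * k := by rw [map_add, map_smul]; rfl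
  set K : ((ℝ × ℝ) × ℝ) →L[ℝ] ((ℝ × ℝ) × ℝ) :=
    (ContinuousLinearMap.fst ℝ (ℝ × ℝ) ℝ).prod 0 with hK
  set F1 : ((ℝ × ℝ) × ℝ) →L[ℝ] ((ℝ × ℝ) × ℝ) :=
    (ContinuousLinearMap.fst ℝ (ℝ × ℝ) ℝ).prod Lp with hF1
  set G1 : ((ℝ × ℝ) × ℝ) →L[ℝ] ((ℝ × ℝ) × ℝ) :=
    (ContinuousLinearMap.fst ℝ (ℝ × ℝ) ℝ).prod
      (k⁻¹ • (ContinuousLinearMap.snd ℝ (ℝ × ℝ) ℝ - Lp.comp K)) with hG1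
  have hF1app : ∀ x : (ℝ × ℝ) × ℝ, F1 x = (x.1, Lp x) := fun x => rfl
  have hG1app : ∀ y : (ℝ × ℝ) × ℝ, G1 y = (y.1, k⁻¹ * (y.2 - Lp (y.1, 0))) := fun y => rfl
  have hleft : Function.LeftInverse G1 F1 := by
    intro x
    rw [hF1app, hG1app]
    simp only
    rw [key x]
    have : k⁻¹ * (Lp (x.1, 0) + x.2 * k - Lp (x.1, 0)) = x.2 := by
      field_simp
      ring
    rw [this]
  have hright : Function.RightInverse G1 F1 := by
    intro y
    rw [hG1app, hF1app]
    simp only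
    rw [key (y.1, k⁻¹ * (y.2 - Lp (y.1, 0)))]
    have : Lp ((y.1, k⁻¹ * (y.2 - Lp (y.1, 0))).1, 0)
        + (y.1, k⁻¹ * (y.2 - Lp (y.1, 0))).2 * k = y.2 := by
      simp only
      field_simp
      ring
    rw [this]
  set Eqv : ((ℝ × ℝ) × ℝ) ≃L[ℝ] ((ℝ × ℝ) × ℝ) :=
    ContinuousLinearEquiv.equivOfInverse F1 G1 hleft hright with hEqv
  have hEqvcoe : (Eqv : ((ℝ × ℝ) × ℝ) →L[ℝ] ((ℝ × ℝ) × ℝ)) = F1 :=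
    ContinuousLinearMap.ext fun x => rfl
  have hGd : HasFDerivAt mcG (Eqv : ((ℝ × ℝ) × ℝ) →L[ℝ] ((ℝ × ℝ) × ℝ)) x₀ := by
    rw [hEqvcoe]
    exact (hasFDerivAt_fst).prodMk hPdf
  -- local inverse
  set inv := hGci.localInverse hGd (by simp) with hinv
  have hinv_cd : ContDiffAt ℝ (⊤ : ℕ∞) inv (mcG x₀) := hGci.to_localInverse hGd (by simp)
  have hGx₀ : mcG x₀ = (p₀, 0) := by
    simp only [mcG, mcPsiF, hx₀]
    rw [hHroot]
  have hinv_val : inv (p₀, 0) = x₀ := by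
    rw [← hGx₀]
    exact hGci.localInverse_apply_image hGd (by simp)
  have hstrict := hGci.hasStrictFDerivAt' hGd (by simp : ((⊤ : ℕ∞) : WithTop ℕ∞) ≠ 0)
  have hrinv : ∀ᶠ y in nhds (mcG x₀), mcG (inv y) = y :=
    hstrict.eventually_right_inverse
  -- the candidate local smooth function
  have hcurve2 : ContDiff ℝ (⊤ : ℕ∞) (fun p : ℝ × ℝ => (p, (0 : ℝ))) :=
    contDiff_id.prodMk contDiff_const
  have hinv_cd' : ContDiffAt ℝ (⊤ : ℕ∞) inv (p₀, (0 : ℝ)) := hGx₀ ▸ hinv_cd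
  have htil_cd : ContDiffAt ℝ (⊤ : ℕ∞) (fun p : ℝ × ℝ => (inv (p, (0 : ℝ))).2) p₀ := by
    have h2 : ContDiffAt ℝ (⊤ : ℕ∞) (fun p : ℝ × ℝ => inv (p, (0 : ℝ))) p₀ :=
      hinv_cd'.comp p₀ hcurve2.contDiffAt
    exact contDiffAt_snd.comp p₀ h2
  -- mcH agrees with the local function near p₀
  have htendsto : Filter.Tendsto (fun p : ℝ × ℝ => (p, (0 : ℝ))) (nhds p₀) (nhds (p₀, (0 : ℝ))) :=
    ((continuous_id.prodMk continuous_const).tendsto p₀)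
  have hrinv' : ∀ᶠ p in nhds p₀, mcG (inv (p, (0 : ℝ))) = (p, (0 : ℝ)) := by
    rw [hGx₀] at hrinv
    exact htendsto.eventually hrinv
  have hcont2 : ContinuousAt (fun p : ℝ × ℝ => (inv (p, (0 : ℝ))).2) p₀ :=
    htil_cd.continuousAt
  have hval2 : (inv (p₀, (0 : ℝ))).2 = mcH p₀ := by rw [hinv_val]
  have hmemIoo : ∀ᶠ p in nhds p₀, (inv (p, (0 : ℝ))).2 ∈ Set.Ioo (0 : ℝ) 1 := by
    apply hcont2.eventually_mem
    rw [hval2]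
    exact isOpen_Ioo.mem_nhds hHmem
  have hmemD : ∀ᶠ p in nhds p₀,
      p ∈ Set.Ioo (0 : ℝ) 1 ×ˢ Set.Ioo (Real.exp (-2)) 1 :=
    ((isOpen_Ioo.prod isOpen_Ioo).eventually_mem (Set.mem_prod.mpr ⟨hm, hκ⟩))
  have heq : mcH =ᶠ[nhds p₀] (fun p : ℝ × ℝ => (inv (p, (0 : ℝ))).2) := by
    filter_upwards [hrinv', hmemIoo, hmemD] with p hr hio hd
    have h1c : (inv (p, (0 : ℝ))).1 = p := congrArg Prod.fst hr
    have h2c : mcPsiF (inv (p, (0 : ℝ))) = 0 := congrArg Prod.snd hr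
    have h2c' : mcPsi p.1 p.2 ((inv (p, (0 : ℝ))).2) = 0 := by
      have : mcPsiF (inv (p, (0 : ℝ)))
          = mcPsi (inv (p, (0 : ℝ))).1.1 (inv (p, (0 : ℝ))).1.2 (inv (p, (0 : ℝ))).2 := rfl
      rw [this, h1c] at h2c
      exact h2c
    rw [Set.mem_prod] at hd
    exact (mcH_unique hd.1 hd.2 hio h2c').symm
  exact htil_cd.congr_of_eventuallyEq heq

theorem merging_coefficient_smooth :
    ∃ H : ℝ × ℝ → ℝ,
      ContDiffOn ℝ (⊤ : ℕ∞) H (Set.Ioo (0 : ℝ) 1 ×ˢ Set.Ioo (Real.exp (-2)) 1) ∧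
      ∀ p ∈ Set.Ioo (0 : ℝ) 1 ×ˢ Set.Ioo (Real.exp (-2)) 1,
        H p ∈ Set.Icc (0 : ℝ) 1 ∧ IsMaxOn (s p.1 p.2) (Set.Icc 0 1) (H p) := by
  refine ⟨mcH, ?_, ?_⟩
  · intro p hp
    rw [Set.mem_prod] at hp
    exact (mcH_contDiffAt hp.1 hp.2).contDiffWithinAt
  · intro p hp
    rw [Set.mem_prod] at hp
    obtain ⟨hmem, _⟩ := mcH_spec hp.1 hp.2
    exact ⟨⟨le_of_lt hmem.1, le_of_lt hmem.2⟩, mcH_isMaxOn hp.1 hp.2⟩
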